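/- For every n ≥ 1, the quotient of the set of n-formulas of L_□ by the relation of S5[Con]-provable equivalence has exactly 2^(3^n · 2^(3^n − 1)) elements. -/

import Mathlib

namespace KripkeModal

/-- Formulas of the modal language `L_□`: atoms `T(x)`, `F(x)` for variables
`x : ℕ`, negation, conjunction, and box. -/
inductive Fml : Type
  | tt : ℕ → Fml   -- T(x)
  | ff : ℕ → Fml   -- F(x)
  | neg : Fml → Fml
  | and : Fml → Fml → Fml
  | box : Fml → Fml
deriving DecidableEq

namespace Fml

/-- Material implication, defined from `¬, ∧`. -/
def imp (φ ψ : Fml) : Fml := neg (and φ (neg ψ))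

/-- Disjunction, defined from `¬, ∧`. -/
def or (φ ψ : Fml) : Fml := neg (and (neg φ) (neg ψ))

/-- Biconditional. -/
def iff (φ ψ : Fml) : Fml := and (imp φ ψ) (imp ψ φ)

/-- Diamond: `◇φ := ¬□¬φ`. -/
def dia (φ : Fml) : Fml := neg (box (neg φ))

/-- `N(x) := ¬T(x) ∧ ¬F(x)`. -/
def Nf (x : ℕ) : Fml := and (neg (tt x)) (neg (ff x))

/-- A fixed contradiction. -/
def bot : Fml := and (tt 0) (neg (tt 0))

end Fml

open Fml

/-- Evaluate a formula propositionally under a valuation `v` of the "atoms":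
the atomic formulas `T(x)`, `F(x)` and all boxed formulas are treated as
propositional atoms. -/
def evalProp (v : Fml → Bool) : Fml → Bool
  | Fml.neg φ => !(evalProp v φ)
  | Fml.and φ ψ => evalProp v φ && evalProp v ψ
  | φ => v φ

/-- A formula is a substitution instance of a classical propositional tautology
iff it evaluates to true under every propositional valuation of its atoms. -/
def Tautology (φ : Fml) : Prop := ∀ v : Fml → Bool, evalProp v φ = true

/-- Provability in the modal system `S5[Ax]`: the smallest set of formulas
containing all substitution instances of propositional tautologies, all
instances of K, T and 5, all formulas in `Ax`, closed under modus ponens and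
necessitation.  Taking `Ax = ∅` gives `S5` itself. -/
inductive Prv (Ax : Set Fml) : Fml → Prop
  | taut {φ} : Tautology φ → Prv Ax φ
  | axK (A B : Fml) : Prv Ax (imp (box (imp A B)) (imp (box A) (box B)))
  | axT (A : Fml) : Prv Ax (imp (box A) A)
  | ax5 (A : Fml) : Prv Ax (imp (dia A) (box (dia A)))
  | axm {φ} : φ ∈ Ax → Prv Ax φ
  | mp {A B} : Prv Ax (imp A B) → Prv Ax A → Prv Ax B
  | nec {A} : Prv Ax A → Prv Ax (box A)

/-- A system is consistent if it does not prove a contradiction. -/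
def Consistent (Ax : Set Fml) : Prop := ¬ Prv Ax Fml.bot

/-- The axiom schema `Con`: `¬(T(x) ∧ F(x))`. -/
def ConAx : Set Fml := { φ | ∃ x : ℕ, φ = neg (and (tt x) (ff x)) }

/-- The axiom schema `Ground`: `(◇T(x) ∧ ◇F(x)) → ◇N(x)`. -/
def GroundAx : Set Fml :=
  { φ | ∃ x : ℕ, φ = imp (and (dia (tt x)) (dia (ff x))) (dia (Nf x)) }

/-- Conjunction of a list of formulas (empty conjunction is `¬⊥`). -/
def bigAnd : List Fml → Fml
  | [] => Fml.neg Fml.bot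
  | [φ] => φ
  | φ :: ψ :: rest => Fml.and φ (bigAnd (ψ :: rest))

/-- Disjunction of a list of formulas (the empty disjunction is the fixed
contradiction `⊥`). -/
def bigOr : List Fml → Fml
  | [] => Fml.bot
  | [φ] => φ
  | φ :: ψ :: rest => Fml.or φ (bigOr (ψ :: rest))

/-- The axiom schema `Min_n`: all instances
`(◇N(x_1) ∧ … ∧ ◇N(x_n)) → ◇(N(x_1) ∧ … ∧ N(x_n))` obtained by substituting
arbitrary (not necessarily distinct) variables for `x_1, …, x_n`. -/
def MinAx (n : ℕ) : Set Fml :=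
  { φ | ∃ l : List ℕ, l.length = n ∧
      φ = imp (bigAnd (l.map (fun x => dia (Nf x)))) (dia (bigAnd (l.map Nf))) }

/-- A formula is extensional if it contains no `□`. -/
def Extensional : Fml → Prop
  | tt _ => True
  | ff _ => True
  | Fml.neg φ => Extensional φ
  | Fml.and φ ψ => Extensional φ ∧ Extensional ψ
  | box _ => False

/-- A formula is intensional if every atomic subformula occurs within the
scope of a `□`. -/
def Intensional : Fml → Prop
  | tt _ => False
  | ff _ => False
  | Fml.neg φ => Intensional φ
  | Fml.and φ ψ => Intensional φ ∧ Intensional ψ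
  | box _ => True

/-- The set of variables occurring in a formula. -/
def vars : Fml → Set ℕ
  | tt x => {x}
  | ff x => {x}
  | Fml.neg φ => vars φ
  | Fml.and φ ψ => vars φ ∪ vars ψ
  | box φ => vars φ

/-- An `n`-formula: one whose atoms use only the variables `x_1, …, x_n`. -/
def IsNFormula (n : ℕ) (φ : Fml) : Prop := vars φ ⊆ {x | 1 ≤ x ∧ x ≤ n}

/-- A 1-formula: one whose atoms use only the single variable `x_1`. -/
abbrev Is1Formula (φ : Fml) : Prop := IsNFormula 1 φ

/-- `φ` is `Γ`-maximal for the system `S5[Ax]`. -/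
def GammaMaximal (Ax : Set Fml) (Γ : Set Fml) (φ : Fml) : Prop :=
  Consistent (Ax ∪ {φ}) ∧ φ ∈ Γ ∧
    ∀ ψ ∈ Γ, Prv Ax (imp φ ψ) ∨ Prv Ax (imp φ (neg ψ))

/-- Extensional `n`-isolators for `S5[Ax]`. -/
def ExtIsolator (n : ℕ) (Ax : Set Fml) (φ : Fml) : Prop :=
  GammaMaximal Ax {ψ | Extensional ψ ∧ IsNFormula n ψ} φ

/-- Intensional `n`-isolators for `S5[Ax]`. -/
def IntIsolator (n : ℕ) (Ax : Set Fml) (φ : Fml) : Prop :=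
  GammaMaximal Ax {ψ | Intensional ψ ∧ IsNFormula n ψ} φ

/-- An `n`-isolator for `S5[Ax]`: a consistent conjunction `ε ∧ ι` of an
extensional `n`-isolator and an intensional `n`-isolator. -/
def Isolator (n : ℕ) (Ax : Set Fml) (φ : Fml) : Prop :=
  ∃ ε ι, ExtIsolator n Ax ε ∧ IntIsolator n Ax ι ∧
    φ = Fml.and ε ι ∧ Consistent (Ax ∪ {φ})

/-- Satisfaction in a model `(W, V)` (with `V = (V1, V2)`) at a world `w`. -/
def Sat {W : Type*} (V1 V2 : ℕ → Set W) : W → Fml → Prop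
  | w, tt x => w ∈ V1 x
  | w, ff x => w ∈ V2 x
  | w, Fml.neg φ => ¬ Sat V1 V2 w φ
  | w, Fml.and φ ψ => Sat V1 V2 w φ ∧ Sat V1 V2 w ψ
  | _, box φ => ∀ v, Sat V1 V2 v φ

/-- The variable assignment satisfies the `Con` constraint. -/
def ConC {W : Type*} (V1 V2 : ℕ → Set W) : Prop := ∀ x, V1 x ∩ V2 x = ∅

/-- The variable assignment satisfies the `Ground` constraint. -/
def GroundC {W : Type*} (V1 V2 : ℕ → Set W) : Prop :=
  ∀ x, (V1 x).Nonempty → (V2 x).Nonempty → ((V1 x ∪ V2 x)ᶜ : Set W).Nonempty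

/-- The variable assignment satisfies the `Min` constraint. -/
def MinC {W : Type*} (V1 V2 : ℕ → Set W) : Prop :=
  ∀ l : List ℕ, l ≠ [] → (∀ x ∈ l, ((V1 x ∪ V2 x)ᶜ : Set W).Nonempty) →
    (⋂ x ∈ l, ((V1 x ∪ V2 x)ᶜ : Set W)).Nonempty

/-- The prime conditions for a subset `S` of the tensor `[3]^n`, realized as
`Fin n → Fin 3` where the value `0` stands for the layer `T`, `1` for `F`,
and `2` for `N` (i.e. `1, 2, 3` in the paper's numbering). -/
def PrimeConditions (n : ℕ) (S : Set (Fin n → Fin 3)) : Prop :=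
  S.Nonempty ∧
  (∀ j : Fin n, (S ∩ {a | a j = 0}).Nonempty → (S ∩ {a | a j = 1}).Nonempty →
      (S ∩ {a | a j = 2}).Nonempty) ∧
  ∀ J : Set (Fin n), J.Nonempty →
    (∀ j ∈ J, (S ∩ {a | a j = 2}).Nonempty) →
    (S ∩ ⋂ j ∈ J, {a | a j = 2}).Nonempty

/-- `χ_1 = T`, `χ_2 = F`, `χ_3 = N` (with `Fin 3` values `0, 1, 2`). -/
def chi (k : Fin 3) (x : ℕ) : Fml :=
  if k = 0 then tt x else if k = 1 then ff x else Nf x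

/-- The extensional `n`-isolator `φ_a = χ_{a_1}(x_1) ∧ … ∧ χ_{a_n}(x_n)`
associated with a tuple `a ∈ [3]^n`. -/
def tupleFml {n : ℕ} (a : Fin n → Fin 3) : Fml :=
  bigAnd ((List.finRange n).map (fun i => chi (a i) (i.1 + 1)))

open Classical in
/-- The pre-`n`-isolator of `S ⊆ [3]^n`:
`⋀_{a ∈ S} ◇φ_a ∧ ⋀_{a ∉ S} ¬◇φ_a`. -/
noncomputable def preIsolator (n : ℕ) (S : Set (Fin n → Fin 3)) : Fml :=
  bigAnd (((Finset.univ : Finset (Fin n → Fin 3)).toList).map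
    (fun a => if a ∈ S then dia (tupleFml a) else Fml.neg (dia (tupleFml a))))

/-!
The worlds of a finite model of `S5[Con]` in `n` variables can be taken to be tuples
`a ∈ [3]^n` recording whether each `x_i` is `T`, `F` or `N`; a pointed model is a set `S` of
tuples with a designated `a ∈ S`. The isolator `φ_a ∧ pre(S)` proves or refutes each
`n`-formula according to its truth at `(S, a)`: in the box case, `pre(S)` is rigid and rules out
every tuple outside `S`. Hence every `n`-formula is provably equivalent to the disjunction of the
isolators of the pointed models where it holds, and since each isolator holds at exactly one
pointed model, the classes of provably equivalent `n`-formulas correspond to the sets of pointed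
models, of which there are `3^n · 2^(3^n − 1)`.
-/

open Fml

section Propositional

variable {Ax : Set Fml} {A B C : Fml} {l : List Fml}

@[simp] theorem evalProp_neg (v : Fml → Bool) (φ : Fml) :
    evalProp v (neg φ) = !evalProp v φ := rfl

@[simp] theorem evalProp_and (v : Fml → Bool) (φ ψ : Fml) :
    evalProp v (Fml.and φ ψ) = (evalProp v φ && evalProp v ψ) := rfl

@[simp] theorem evalProp_imp (v : Fml → Bool) (φ ψ : Fml) :
    evalProp v (imp φ ψ) = (!evalProp v φ || evalProp v ψ) := by
  simp [imp]

@[simp] theorem evalProp_or (v : Fml → Bool) (φ ψ : Fml) :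
    evalProp v (Fml.or φ ψ) = (evalProp v φ || evalProp v ψ) := by
  simp [Fml.or]

@[simp] theorem evalProp_iff (v : Fml → Bool) (φ ψ : Fml) :
    evalProp v (Fml.iff φ ψ) = (evalProp v φ == evalProp v ψ) := by
  simp only [Fml.iff, evalProp_and, evalProp_imp]
  cases evalProp v φ <;> cases evalProp v ψ <;> rfl

@[simp] theorem evalProp_bot (v : Fml → Bool) : evalProp v bot = false := by
  simp [bot]

@[simp] theorem evalProp_bigAnd (v : Fml → Bool) (l : List Fml) :
    evalProp v (bigAnd l) = l.all (evalProp v) := by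
  induction l using bigAnd.induct <;> simp_all [bigAnd]

@[simp] theorem evalProp_bigOr (v : Fml → Bool) (l : List Fml) :
    evalProp v (bigOr l) = l.any (evalProp v) := by
  induction l using bigOr.induct <;> simp_all [bigOr]

theorem Prv.mp_taut (h : Tautology (imp A B)) (hA : Prv Ax A) : Prv Ax B :=
  (Prv.taut h).mp hA

theorem Prv.mp_taut₂ (h : Tautology (imp A (imp B C))) (hA : Prv Ax A) (hB : Prv Ax B) :
    Prv Ax C :=
  ((Prv.taut h).mp hA).mp hB

theorem Prv.imp_trans (h₁ : Prv Ax (imp A B)) (h₂ : Prv Ax (imp B C)) : Prv Ax (imp A C) :=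
  Prv.mp_taut₂ (fun v => by simp; grind) h₁ h₂

theorem Prv.imp_and (h₁ : Prv Ax (imp A B)) (h₂ : Prv Ax (imp A C)) :
    Prv Ax (imp A (Fml.and B C)) :=
  Prv.mp_taut₂ (fun v => by simp; grind) h₁ h₂

theorem Prv.and_imp_left : Prv Ax (imp (Fml.and A B) A) :=
  Prv.taut fun v => by simp; grind

theorem Prv.and_imp_right : Prv Ax (imp (Fml.and A B) B) :=
  Prv.taut fun v => by simp; grind

theorem Prv.bigAnd_imp {φ : Fml} (h : φ ∈ l) : Prv Ax (imp (bigAnd l) φ) :=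
  Prv.taut fun v => by simp; grind

theorem Prv.imp_bigOr {φ : Fml} (h : φ ∈ l) : Prv Ax (imp φ (bigOr l)) :=
  Prv.taut fun v => by simp; grind

theorem Prv.bigOr_imp (h : ∀ φ ∈ l, Prv Ax (imp φ C)) : Prv Ax (imp (bigOr l) C) := by
  induction l using bigOr.induct with
  | case1 => exact Prv.taut fun v => by simp [bigOr]
  | case2 φ => exact h φ (by simp)
  | case3 φ ψ rest ih =>
    exact Prv.mp_taut₂ (fun v => by simp [bigOr]; grind) (h φ (by simp))
      (ih fun χ hχ => h χ (by simp_all))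

theorem Prv.bigOr_of_exists (h : ∀ v, ∃ φ ∈ l, evalProp v φ = true) : Prv Ax (bigOr l) :=
  Prv.taut fun v => by simpa using h v

end Propositional

section Modal

variable {Ax : Set Fml} {A B : Fml} {l : List Fml}

theorem Prv.box_mono (h : Prv Ax (imp A B)) : Prv Ax (imp (box A) (box B)) :=
  (Prv.axK A B).mp (Prv.nec h)

theorem Prv.dia_mono (h : Prv Ax (imp A B)) : Prv Ax (imp (dia A) (dia B)) := by
  have h' : Prv Ax (imp (box (neg B)) (box (neg A))) :=
    Prv.box_mono (Prv.mp_taut (fun v => by simp; grind) h)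
  exact Prv.mp_taut (fun v => by simp [dia]; grind) h'

theorem Prv.imp_dia : Prv Ax (imp A (dia A)) :=
  Prv.mp_taut (fun v => by simp [dia]; grind) (Prv.axT (neg A))

theorem Prv.dia_box_imp_box : Prv Ax (imp (dia (box A)) (box A)) := by
  have h₁ : Prv Ax (imp (dia (neg A)) (neg (box A))) :=
    Prv.mp_taut (fun v => by simp [dia]; grind)
      (Prv.box_mono (Ax := Ax) (A := A) (B := neg (neg A)) (Prv.taut fun v => by simp))
  have h₂ : Prv Ax (imp (dia (neg A)) (box (neg (box A)))) :=
    (Prv.ax5 _).imp_trans (Prv.box_mono h₁)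
  have h₃ : Prv Ax (imp (box (neg (neg A))) (box A)) := Prv.box_mono (Prv.taut fun v => by simp)
  exact Prv.mp_taut₂ (fun v => by simp [dia]; grind) h₂ h₃

theorem Prv.box_imp_box_box : Prv Ax (imp (box A) (box (box A))) :=
  Prv.imp_dia.imp_trans ((Prv.ax5 _).imp_trans (Prv.box_mono Prv.dia_box_imp_box))

theorem Prv.not_dia_imp_box_not_dia : Prv Ax (imp (neg (dia A)) (box (neg (dia A)))) := by
  have h : Prv Ax (imp (box (neg A)) (box (neg (dia A)))) :=
    Prv.box_imp_box_box.imp_trans (Prv.box_mono (Prv.taut fun v => by simp [dia]))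
  exact Prv.mp_taut (fun v => by simp [dia]; grind) h

theorem Prv.box_and_box_imp : Prv Ax (imp (Fml.and (box A) (box B)) (box (Fml.and A B))) := by
  have h : Prv Ax (imp (box A) (imp (box B) (box (Fml.and A B)))) :=
    (Prv.box_mono (Prv.taut fun v => by simp; grind)).imp_trans (Prv.axK B _)
  exact Prv.mp_taut (fun v => by simp; grind) h

theorem Prv.dia_and_box_imp : Prv Ax (imp (Fml.and (dia A) (box B)) (dia (Fml.and A B))) := by
  have h : Prv Ax (imp (box B) (imp (box (neg (Fml.and A B))) (box (neg A)))) :=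
    (Prv.box_mono (Prv.taut fun v => by simp; grind)).imp_trans (Prv.axK _ _)
  exact Prv.mp_taut (fun v => by simp [dia]; grind) h

theorem Prv.bigAnd_rigid (h : ∀ φ ∈ l, Prv Ax (imp φ (box φ))) :
    Prv Ax (imp (bigAnd l) (box (bigAnd l))) := by
  induction l using bigAnd.induct with
  | case1 =>
    exact Prv.mp_taut (A := box (bigAnd [])) (fun v => by simp)
      (Prv.nec (Prv.taut fun v => by simp [bigAnd]))
  | case2 φ => exact h φ (by simp)
  | case3 φ ψ rest ih =>
    have hR := ih fun χ hχ => h χ (by simp_all)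
    exact (Prv.mp_taut₂ (fun v => by simp [bigAnd]; grind) (h φ (by simp)) hR).imp_trans
      Prv.box_and_box_imp

end Modal

section Semantics

variable {W : Type*} {V₁ V₂ : ℕ → Set W} {w : W} {φ ψ : Fml}

@[simp] theorem sat_neg : Sat V₁ V₂ w (neg φ) ↔ ¬Sat V₁ V₂ w φ := Iff.rfl

@[simp] theorem sat_and :
    Sat V₁ V₂ w (Fml.and φ ψ) ↔ Sat V₁ V₂ w φ ∧ Sat V₁ V₂ w ψ := Iff.rfl

@[simp] theorem sat_box : Sat V₁ V₂ w (box φ) ↔ ∀ u, Sat V₁ V₂ u φ := Iff.rfl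

@[simp] theorem sat_imp :
    Sat V₁ V₂ w (imp φ ψ) ↔ (Sat V₁ V₂ w φ → Sat V₁ V₂ w ψ) := by
  simp [imp]

@[simp] theorem sat_iff :
    Sat V₁ V₂ w (Fml.iff φ ψ) ↔ (Sat V₁ V₂ w φ ↔ Sat V₁ V₂ w ψ) := by
  simp [Fml.iff]
  tauto

@[simp] theorem sat_dia : Sat V₁ V₂ w (dia φ) ↔ ∃ u, Sat V₁ V₂ u φ := by
  simp [dia]

@[simp] theorem sat_bigAnd {l : List Fml} :
    Sat V₁ V₂ w (bigAnd l) ↔ ∀ φ ∈ l, Sat V₁ V₂ w φ := by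
  induction l using bigAnd.induct <;> simp_all [bigAnd, bot]

@[simp] theorem sat_bigOr {l : List Fml} :
    Sat V₁ V₂ w (bigOr l) ↔ ∃ φ ∈ l, Sat V₁ V₂ w φ := by
  induction l using bigOr.induct with
  | case3 => simp_all [bigOr, Fml.or]; tauto
  | _ => simp [bigOr, bot]

open Classical in
theorem evalProp_decide_sat (φ : Fml) :
    evalProp (fun ψ => decide (Sat V₁ V₂ w ψ)) φ = decide (Sat V₁ V₂ w φ) := by
  induction φ <;> simp_all [evalProp]

theorem Prv.sat {Ax : Set Fml} (hAx : ∀ ψ ∈ Ax, ∀ u, Sat V₁ V₂ u ψ) (h : Prv Ax φ)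
    (w : W) : Sat V₁ V₂ w φ := by
  induction h generalizing w with
  | taut h =>
    classical
    simpa [evalProp_decide_sat] using h fun ψ => decide (Sat V₁ V₂ w ψ)
  | axK => simp_all
  | axT => simp_all
  | ax5 => simp_all
  | axm h => exact hAx _ h w
  | mp _ _ ih₁ ih₂ => exact (sat_imp.mp (ih₁ w)) (ih₂ w)
  | nec _ ih => exact fun u => ih u

theorem sat_of_mem_conAx (hV : ConC V₁ V₂) (h : ψ ∈ ConAx) (w : W) : Sat V₁ V₂ w ψ := by
  obtain ⟨x, rfl⟩ := h
  exact fun hw => (hV x).subset hw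

end Semantics

section Settles

variable {Ax : Set Fml} {δ δ' φ ψ : Fml} {p q : Prop}

def Settles (Ax : Set Fml) (δ φ : Fml) (p : Prop) : Prop :=
  (p → Prv Ax (imp δ φ)) ∧ (¬p → Prv Ax (imp δ (neg φ)))

theorem Settles.of_imp (hδ : Prv Ax (imp δ' δ)) (h : Settles Ax δ φ p) : Settles Ax δ' φ p :=
  ⟨fun hp => hδ.imp_trans (h.1 hp), fun hp => hδ.imp_trans (h.2 hp)⟩

theorem Settles.of_iff (hpq : p ↔ q) (h : Settles Ax δ φ p) : Settles Ax δ φ q :=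
  propext hpq ▸ h

theorem Settles.neg (h : Settles Ax δ φ p) : Settles Ax δ (neg φ) ¬p :=
  ⟨h.2, fun hp => (h.1 (not_not.mp hp)).imp_trans (Prv.taut fun v => by simp)⟩

theorem Settles.and (h₁ : Settles Ax δ φ p) (h₂ : Settles Ax δ ψ q) :
    Settles Ax δ (Fml.and φ ψ) (p ∧ q) := by
  refine ⟨fun hpq => (h₁.1 hpq.1).imp_and (h₂.1 hpq.2), fun hpq => ?_⟩
  rcases not_and_or.mp hpq with hp | hq
  · exact (h₁.2 hp).imp_trans (Prv.taut fun v => by simp; grind)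
  · exact (h₂.2 hq).imp_trans (Prv.taut fun v => by simp; grind)

end Settles

section Isolators

variable {Ax : Set Fml} {n : ℕ} {S : Set (Fin n → Fin 3)} {a : Fin n → Fin 3} {φ : Fml}

theorem chi_settles_tt (k : Fin 3) (x : ℕ) : Settles ConAx (chi k x) (tt x) (k = 0) := by
  fin_cases k
  · exact ⟨fun _ => Prv.taut fun v => by simp [chi], by simp⟩
  · exact ⟨by simp, fun _ => Prv.mp_taut (fun v => by simp [chi]; grind)
      (Prv.axm ⟨x, rfl⟩)⟩
  · exact ⟨by simp, fun _ => Prv.taut fun v => by simp [chi, Nf]; grind⟩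

theorem chi_settles_ff (k : Fin 3) (x : ℕ) : Settles ConAx (chi k x) (ff x) (k = 1) := by
  fin_cases k
  · exact ⟨by simp, fun _ => Prv.mp_taut (fun v => by simp [chi]; grind)
      (Prv.axm ⟨x, rfl⟩)⟩
  · exact ⟨fun _ => Prv.taut fun v => by simp [chi], by simp⟩
  · exact ⟨by simp, fun _ => Prv.taut fun v => by simp [chi, Nf]; grind⟩

theorem tupleFml_imp_chi (a : Fin n → Fin 3) (i : Fin n) :
    Prv Ax (imp (tupleFml a) (chi (a i) (i.1 + 1))) :=
  Prv.bigAnd_imp (List.mem_map_of_mem (List.mem_finRange i))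

theorem exists_evalProp_tupleFml (v : Fml → Bool) :
    ∃ a : Fin n → Fin 3, evalProp v (tupleFml a) = true := by
  refine ⟨fun i => if v (tt (i.1 + 1)) then 0 else if v (ff (i.1 + 1)) then 1 else 2, ?_⟩
  simp only [tupleFml, evalProp_bigAnd, List.all_map, List.all_eq_true, Function.comp_apply]
  intro i _
  by_cases h₁ : v (tt (i.1 + 1)) <;> by_cases h₂ : v (ff (i.1 + 1)) <;>
    simp [h₁, h₂, chi, Nf, evalProp]

theorem Prv.bigOr_tupleFml :
    Prv Ax (bigOr ((Finset.univ : Finset (Fin n → Fin 3)).toList.map tupleFml)) :=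
  Prv.bigOr_of_exists fun v => by
    obtain ⟨a, ha⟩ := exists_evalProp_tupleFml (n := n) v
    exact ⟨tupleFml a, by simp, ha⟩

theorem preIsolator_imp_dia (h : a ∈ S) : Prv Ax (imp (preIsolator n S) (dia (tupleFml a))) :=
  Prv.bigAnd_imp (List.mem_map.mpr ⟨a, by simp, if_pos h⟩)

theorem preIsolator_imp_not_dia (h : a ∉ S) :
    Prv Ax (imp (preIsolator n S) (neg (dia (tupleFml a)))) :=
  Prv.bigAnd_imp (List.mem_map.mpr ⟨a, by simp, if_neg h⟩)

theorem preIsolator_rigid : Prv Ax (imp (preIsolator n S) (box (preIsolator n S))) := by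
  refine Prv.bigAnd_rigid fun ψ hψ => ?_
  obtain ⟨b, -, rfl⟩ := List.mem_map.mp hψ
  split_ifs
  · exact Prv.ax5 _
  · exact Prv.not_dia_imp_box_not_dia

theorem exists_evalProp_preIsolator (v : Fml → Bool) :
    ∃ S : Set (Fin n → Fin 3), evalProp v (preIsolator n S) = true := by
  refine ⟨{a | v (box (neg (tupleFml a))) = false}, ?_⟩
  simp only [preIsolator, evalProp_bigAnd, List.all_map, List.all_eq_true, Function.comp_apply]
  intro a _
  by_cases h : v (box (neg (tupleFml a))) <;> simp [h, dia, evalProp]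

noncomputable def isolator (S : Set (Fin n → Fin 3)) (a : Fin n → Fin 3) : Fml :=
  Fml.and (tupleFml a) (preIsolator n S)

theorem isolator_imp_of_not_mem (h : a ∉ S) (C : Fml) : Prv Ax (imp (isolator S a) C) :=
  Prv.mp_taut₂ (fun v => by simp [isolator]; grind) (Prv.imp_dia (A := tupleFml a))
    (preIsolator_imp_not_dia h)

theorem preIsolator_settles_box {P : S → Prop}
    (h : ∀ b : S, Settles Ax (isolator S b) φ (P b)) :
    Settles Ax (preIsolator n S) (box φ) (∀ b, P b) := by
  constructor
  · intro hP
    have hcases : ∀ ψ ∈ (Finset.univ : Finset (Fin n → Fin 3)).toList.map tupleFml,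
        Prv Ax (imp ψ (imp (preIsolator n S) φ)) := by
      intro ψ hψ
      obtain ⟨b, -, rfl⟩ := List.mem_map.mp hψ
      by_cases hb : b ∈ S
      · exact Prv.mp_taut (fun v => by simp [isolator]; grind) ((h ⟨b, hb⟩).1 (hP _))
      · exact Prv.mp_taut (fun v => by simp [isolator]; grind) (isolator_imp_of_not_mem hb φ)
    have hφ : Prv Ax (imp (preIsolator n S) φ) :=
      (Prv.bigOr_imp hcases).mp Prv.bigOr_tupleFml
    exact preIsolator_rigid.imp_trans (Prv.box_mono hφ)
  · intro hP
    obtain ⟨b, hb⟩ := not_forall.mp hP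
    have hdia : Prv Ax (imp (preIsolator n S) (dia (isolator S b))) :=
      ((preIsolator_imp_dia b.2).imp_and preIsolator_rigid).imp_trans Prv.dia_and_box_imp
    have hnot : Prv Ax (imp (dia (isolator S b)) (dia (neg φ))) := Prv.dia_mono ((h b).2 hb)
    exact (hdia.imp_trans hnot).imp_trans (Prv.mp_taut (fun v => by simp [dia]; grind)
      (Prv.box_mono (Ax := Ax) (A := φ) (B := neg (neg φ)) (Prv.taut fun v => by simp)))

end Isolators

section TupleModels

variable {n : ℕ} {S : Set (Fin n → Fin 3)} {a : S} {φ : Fml}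

def tupleVal (S : Set (Fin n → Fin 3)) (k : Fin 3) (x : ℕ) : Set S :=
  {a | ∃ i : Fin n, i.1 + 1 = x ∧ a.1 i = k}

abbrev SatIn (S : Set (Fin n → Fin 3)) : S → Fml → Prop :=
  Sat (tupleVal S 0) (tupleVal S 1)

theorem mem_tupleVal_succ {k : Fin 3} {i : Fin n} :
    a ∈ tupleVal S k (i.1 + 1) ↔ a.1 i = k := by
  refine ⟨fun ⟨j, hj, hk⟩ => ?_, fun h => ⟨i, rfl, h⟩⟩
  rwa [Fin.ext (Nat.succ_injective hj)] at hk

theorem conC_tupleVal : ConC (tupleVal S 0) (tupleVal S 1) := by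
  refine fun x => Set.eq_empty_of_forall_notMem fun a ⟨⟨i, hi, h₀⟩, j, hj, h₁⟩ => ?_
  subst hi
  rw [Fin.ext (Nat.succ_injective hj)] at h₁
  simp [h₀] at h₁

theorem satIn_chi {k : Fin 3} {i : Fin n} : SatIn S a (chi k (i.1 + 1)) ↔ a.1 i = k := by
  fin_cases k <;> simp [chi, Nf, Sat, mem_tupleVal_succ]
  omega

theorem satIn_tupleFml {b : Fin n → Fin 3} : SatIn S a (tupleFml b) ↔ a.1 = b := by
  simp [tupleFml, satIn_chi, funext_iff, eq_comm]

theorem satIn_preIsolator {T : Set (Fin n → Fin 3)} : SatIn S a (preIsolator n T) ↔ T = S := by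
  simp only [preIsolator, sat_bigAnd, List.mem_map, Finset.mem_toList, Finset.mem_univ,
    true_and, forall_exists_index, forall_apply_eq_imp_iff, Set.ext_iff]
  refine forall_congr' fun b => ?_
  split_ifs with hb <;> simp [satIn_tupleFml, hb]

theorem satIn_isolator {T : Set (Fin n → Fin 3)} {b : Fin n → Fin 3} :
    SatIn S a (isolator T b) ↔ a.1 = b ∧ T = S := by
  simp [isolator, satIn_tupleFml, satIn_preIsolator]

theorem IsNFormula.exists_fin_succ_eq (hφ : IsNFormula n φ) {x : ℕ} (hx : x ∈ vars φ) :
    ∃ i : Fin n, i.1 + 1 = x := by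
  obtain ⟨h₁, h₂⟩ : 1 ≤ x ∧ x ≤ n := hφ hx
  exact ⟨⟨x - 1, by omega⟩, by simp; omega⟩

theorem isolator_settles (hφ : IsNFormula n φ) (a : S) :
    Settles ConAx (isolator S a) φ (SatIn S a φ) := by
  induction φ generalizing a with
  | tt x =>
    obtain ⟨i, rfl⟩ := hφ.exists_fin_succ_eq rfl
    exact ((chi_settles_tt (a.1 i) _).of_imp
      (Prv.and_imp_left.imp_trans (tupleFml_imp_chi _ i))).of_iff mem_tupleVal_succ.symm
  | ff x =>
    obtain ⟨i, rfl⟩ := hφ.exists_fin_succ_eq rfl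
    exact ((chi_settles_ff (a.1 i) _).of_imp
      (Prv.and_imp_left.imp_trans (tupleFml_imp_chi _ i))).of_iff mem_tupleVal_succ.symm
  | neg φ ih => exact (ih hφ a).neg
  | and φ ψ ih₁ ih₂ =>
    exact (ih₁ (fun x hx => hφ (Or.inl hx)) a).and (ih₂ (fun x hx => hφ (Or.inr hx)) a)
  | box φ ih => exact (preIsolator_settles_box fun b => ih hφ b).of_imp Prv.and_imp_right

end TupleModels

section NormalForm

variable {n : ℕ} {φ ψ : Fml}

abbrev PointedModel (n : ℕ) := {p : (Fin n → Fin 3) × Set (Fin n → Fin 3) // p.1 ∈ p.2}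

namespace PointedModel

abbrev Models (p : PointedModel n) (φ : Fml) : Prop := SatIn p.1.2 ⟨p.1.1, p.2⟩ φ

noncomputable abbrev isolator (p : PointedModel n) : Fml := KripkeModal.isolator p.1.2 p.1.1

theorem models_of_prv (h : Prv ConAx φ) (p : PointedModel n) : p.Models φ :=
  h.sat (fun _ hψ => sat_of_mem_conAx conC_tupleVal hψ) _

theorem models_isolator {p q : PointedModel n} : p.Models q.isolator ↔ p = q :=
  satIn_isolator.trans (by rw [Subtype.ext_iff, Prod.ext_iff, eq_comm (a := q.1.2)])

end PointedModel

open Classical in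
theorem Prv.bigOr_isolator {Ax : Set Fml} :
    Prv Ax (bigOr ((Finset.univ : Finset (PointedModel n)).toList.map PointedModel.isolator)) := by
  have hall : Prv Ax (bigOr
      ((Finset.univ : Finset ((Fin n → Fin 3) × Set (Fin n → Fin 3))).toList.map
        fun p => KripkeModal.isolator p.2 p.1)) :=
    Prv.bigOr_of_exists fun v => by
      obtain ⟨a, ha⟩ := exists_evalProp_tupleFml (n := n) v
      obtain ⟨S, hS⟩ := exists_evalProp_preIsolator (n := n) v
      exact ⟨KripkeModal.isolator S a, List.mem_map.mpr ⟨(a, S), by simp, rfl⟩,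
        by simp [KripkeModal.isolator, ha, hS]⟩
  refine (Prv.bigOr_imp fun ψ hψ => ?_).mp hall
  obtain ⟨⟨a, S⟩, -, rfl⟩ := List.mem_map.mp hψ
  by_cases h : a ∈ S
  · exact Prv.imp_bigOr (List.mem_map.mpr ⟨⟨(a, S), h⟩, by simp, rfl⟩)
  · exact isolator_imp_of_not_mem h _

open Classical in
noncomputable def normalForm (P : PointedModel n → Prop) : Fml :=
  bigOr (((Finset.univ : Finset (PointedModel n)).filter P).toList.map PointedModel.isolator)

theorem Prv.isolator_imp_normalForm {Ax : Set Fml} {P : PointedModel n → Prop}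
    {p : PointedModel n} (hp : P p) : Prv Ax (imp p.isolator (normalForm P)) :=
  Prv.imp_bigOr (List.mem_map_of_mem (by simpa using hp))

theorem models_normalForm {P : PointedModel n → Prop} {q : PointedModel n} :
    q.Models (normalForm P) ↔ P q := by
  simp only [normalForm, sat_bigOr, List.mem_map, Finset.mem_toList, Finset.mem_filter,
    Finset.mem_univ, true_and]
  constructor
  · rintro ⟨_, ⟨p, hp, rfl⟩, hq⟩
    rwa [PointedModel.models_isolator.mp hq]
  · exact fun hq => ⟨_, ⟨q, hq, rfl⟩, PointedModel.models_isolator.mpr rfl⟩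

theorem Prv.iff_normalForm (hφ : IsNFormula n φ) :
    Prv ConAx (Fml.iff φ (normalForm fun p : PointedModel n => p.Models φ)) := by
  set P : PointedModel n → Prop := fun p => p.Models φ
  have h₁ : Prv ConAx (imp (normalForm P) φ) := Prv.bigOr_imp fun ψ hψ => by
    obtain ⟨p, hp, rfl⟩ := List.mem_map.mp hψ
    exact (isolator_settles hφ _).1 (by simpa using hp)
  have h₂ : Prv ConAx (imp φ (normalForm P)) := by
    refine (Prv.bigOr_imp fun ψ hψ => ?_).mp (Prv.bigOr_isolator (n := n))
    obtain ⟨p, -, rfl⟩ := List.mem_map.mp hψ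
    by_cases hp : P p
    · exact Prv.mp_taut (fun v => by simp; grind) (Prv.isolator_imp_normalForm hp)
    · exact Prv.mp_taut (fun v => by simp; grind) ((isolator_settles hφ _).2 hp)
  exact Prv.mp_taut₂ (fun v => by simp; grind) h₂ h₁

theorem Prv.iff_of_models_iff (hφ : IsNFormula n φ) (hψ : IsNFormula n ψ)
    (h : ∀ p : PointedModel n, p.Models φ ↔ p.Models ψ) : Prv ConAx (Fml.iff φ ψ) := by
  have hnf := Prv.iff_normalForm hψ
  rw [← funext fun p => propext (h p)] at hnf
  exact Prv.mp_taut₂ (fun v => by simp; grind) (Prv.iff_normalForm hφ) hnf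

end NormalForm

section NFormulas

variable {n : ℕ} {l : List Fml}

theorem IsNFormula.bigAnd (h : ∀ φ ∈ l, IsNFormula n φ) (hl : l ≠ []) :
    IsNFormula n (bigAnd l) := by
  induction l using bigAnd.induct with
  | case1 => exact absurd rfl hl
  | case2 φ => exact h φ (by simp)
  | case3 φ ψ rest ih =>
    exact Set.union_subset (h φ (by simp)) (ih (fun χ hχ => h χ (by simp_all)) (by simp))

theorem IsNFormula.bigOr (h : ∀ φ ∈ l, IsNFormula n φ) (hl : l ≠ []) :
    IsNFormula n (bigOr l) := by
  induction l using bigOr.induct with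
  | case1 => exact absurd rfl hl
  | case2 φ => exact h φ (by simp)
  | case3 φ ψ rest ih =>
    exact Set.union_subset (h φ (by simp)) (ih (fun χ hχ => h χ (by simp_all)) (by simp))

theorem isNFormula_chi (k : Fin 3) (i : Fin n) : IsNFormula n (chi k (i.1 + 1)) := by
  intro x hx
  fin_cases k <;> simp_all [chi, Nf, vars]

theorem isNFormula_tupleFml (hn : 0 < n) (a : Fin n → Fin 3) : IsNFormula n (tupleFml a) :=
  IsNFormula.bigAnd (by simp [isNFormula_chi]) (by simp; omega)

theorem isNFormula_preIsolator (hn : 0 < n) (S : Set (Fin n → Fin 3)) :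
    IsNFormula n (preIsolator n S) := by
  refine IsNFormula.bigAnd (fun ψ hψ => ?_) (by simp [Finset.univ_nonempty.ne_empty])
  obtain ⟨b, -, rfl⟩ := List.mem_map.mp hψ
  split_ifs <;> exact isNFormula_tupleFml hn b

theorem isNFormula_isolator (hn : 0 < n) (S : Set (Fin n → Fin 3)) (a : Fin n → Fin 3) :
    IsNFormula n (isolator S a) :=
  Set.union_subset (isNFormula_tupleFml hn a) (isNFormula_preIsolator hn S)

theorem isNFormula_normalForm (hn : 0 < n) {P : PointedModel n → Prop} (hP : ∃ p, P p) :
    IsNFormula n (normalForm P) :=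
  IsNFormula.bigOr (fun ψ hψ => by
    obtain ⟨p, -, rfl⟩ := List.mem_map.mp hψ
    exact isNFormula_isolator hn _ _) (by simpa using hP)

end NFormulas

section Counting

variable {α : Type*}

def memSetEquiv (a : α) : {S : Set α // a ∈ S} ≃ Set {b // b ≠ a} where
  toFun S := {b | b.1 ∈ S.1}
  invFun T := ⟨insert a (Subtype.val '' T), Set.mem_insert a _⟩
  left_inv S := by
    ext b
    by_cases hb : b = a <;> simp [hb, S.2]
  right_inv T := by
    ext b
    simp [b.2]

theorem card_subtype_mem_set [Fintype α] (a : α) :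
    Nat.card {S : Set α // a ∈ S} = 2 ^ (Nat.card α - 1) := by
  classical
  have hne : Nat.card {b // b ≠ a} = Nat.card α - 1 := by
    simp [Nat.card_eq_fintype_card]
  rw [Nat.card_congr (memSetEquiv a), Set, Nat.card_fun, hne]
  simp

theorem card_subtype_mem_prod [Fintype α] :
    Nat.card {p : α × Set α // p.1 ∈ p.2} = Nat.card α * 2 ^ (Nat.card α - 1) := by
  simp [Nat.card_congr (Equiv.subtypeProdEquivSigmaSubtype fun (a : α) (S : Set α) => a ∈ S),
    Nat.card_sigma, card_subtype_mem_set]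

end Counting

section Quotient

variable {n : ℕ}

theorem card_pointedModel : Nat.card (PointedModel n) = 3 ^ n * 2 ^ (3 ^ n - 1) := by
  simp [card_subtype_mem_prod]

def extension (n : ℕ) :
    Quot (fun φ ψ : {f : Fml // IsNFormula n f} => Prv ConAx (Fml.iff φ.1 ψ.1)) →
      PointedModel n → Prop :=
  Quot.lift (fun φ p => p.Models φ.1) fun _ _ h =>
    funext fun p => propext (sat_iff.mp (PointedModel.models_of_prv h p))

theorem extension_injective : Function.Injective (extension n) := by
  rintro ⟨φ⟩ ⟨ψ⟩ h
  exact Quot.sound (Prv.iff_of_models_iff φ.2 ψ.2 fun p => Iff.of_eq (congrFun h p))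

theorem extension_surjective (hn : 0 < n) : Function.Surjective (extension n) := by
  intro P
  by_cases hP : ∃ p, P p
  · exact ⟨Quot.mk _ ⟨normalForm P, isNFormula_normalForm hn hP⟩,
      funext fun q => propext models_normalForm⟩
  · -- `normalForm P` is then the empty disjunction `bot`, which mentions `x_0`
    refine ⟨Quot.mk _ ⟨Fml.and (tt 1) (neg (tt 1)), ?_⟩, funext fun q => ?_⟩
    · simp [IsNFormula, vars]
      omega
    · simp_all [extension]

end Quotient

/-- up to S5[Con]-provable equivalence there are exactly
`2^(3^n · 2^(3^n − 1))` n-variable formulas. -/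
theorem count_n_formulas_S5Con (n : ℕ) (hn : 1 ≤ n) :
    Nat.card (Quot (fun φ ψ : {f : Fml // IsNFormula n f} =>
      Prv ConAx (Fml.iff φ.1 ψ.1))) = 2 ^ (3 ^ n * 2 ^ (3 ^ n - 1)) := by
  rw [Nat.card_eq_of_bijective _ ⟨extension_injective, extension_surjective hn⟩, Nat.card_fun,
    card_pointedModel]
  simp

end KripkeModal
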